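/- For all natural numbers n, the summatory function satisfies S(4n) = 2S(n) - i_n, S(4n+1) = 2S(n) - i_n + i_{2n}, S(4n+2) = 2S(n) - i_n, and S(4n+3) = 2S(n). -/

import Mathlib

/-!
Appending a lowest bit `b` to the binary expansion of `n` keeps the inversions of `n` and adds
one inversion per 1-bit of `n` when `b = 0`, none when `b = 1`. Hence `i (2n+1) = i n`,
`i (4n) = i n` (the popcount is added twice) and `i (4n+2) = - i (2n)` (the new 1-bit adds one
more inversion). So every block `i (4k) + i (4k+1) + i (4k+2) + i (4k+3)` equals `2 i k`, which
gives `S (4n+3) = 2 S n`; the other identities follow by peeling off the last terms of the block.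
-/

/-- `inv2 n` is the number of inversions in the binary representation of `n`,
i.e. the number of pairs of bit positions `a > b` such that bit `a` of `n` is `1`
and bit `b` of `n` is `0`. -/
def inv2 (n : ℕ) : ℕ :=
  ((Finset.range (n + 1) ×ˢ Finset.range (n + 1)).filter
    (fun p => p.2 < p.1 ∧ n.testBit p.1 = true ∧ n.testBit p.2 = false)).card

/-- `iSeq n = (-1)^(inv2 n)`. -/
def iSeq (n : ℕ) : ℤ := (-1) ^ inv2 n


/-- The summatory function `S N = ∑_{0 ≤ n ≤ N} iSeq n`. -/
def S (N : ℕ) : ℤ := ∑ n ∈ Finset.range (N + 1), iSeq n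

open Finset

def inv2Below (m n : ℕ) : ℕ :=
  ((range m ×ˢ range m).filter
    (fun p => p.2 < p.1 ∧ n.testBit p.1 = true ∧ n.testBit p.2 = false)).card

def popcountBelow (m n : ℕ) : ℕ := ((range m).filter (fun a => n.testBit a = true)).card

lemma inv2Below_bit (b : Bool) (m n : ℕ) :
    inv2Below (m + 1) (Nat.bit b n) = inv2Below m n + bif b then 0 else popcountBelow m n := by
  simp only [inv2Below, popcountBelow, card_filter, sum_product, sum_range_succ',
    Nat.testBit_bit_succ, Nat.testBit_bit_zero]
  cases b <;> simp [sum_add_distrib]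

lemma popcountBelow_bit (b : Bool) (m n : ℕ) :
    popcountBelow (m + 1) (Nat.bit b n) = popcountBelow m n + b.toNat := by
  simp only [popcountBelow, card_filter, sum_range_succ', Nat.testBit_bit_succ,
    Nat.testBit_bit_zero]
  cases b <;> simp

lemma lt_of_testBit_of_lt_two_pow {m n a : ℕ} (hn : n < 2 ^ m) (ha : n.testBit a = true) :
    a < m :=
  (Nat.pow_lt_pow_iff_right (by norm_num)).1 ((Nat.ge_two_pow_of_testBit ha).trans_lt hn)

lemma inv2Below_congr {m m' n : ℕ} (h : n < 2 ^ m) (h' : n < 2 ^ m') :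
    inv2Below m n = inv2Below m' n := by
  unfold inv2Below
  congr 1
  ext ⟨a, b⟩
  simp only [mem_filter, mem_product, mem_range, and_congr_left_iff]
  rintro ⟨hba, ha, -⟩
  have := lt_of_testBit_of_lt_two_pow h ha
  have := lt_of_testBit_of_lt_two_pow h' ha
  omega

lemma inv2_eq_inv2Below {m n : ℕ} (h : n < 2 ^ m) : inv2 n = inv2Below m n :=
  inv2Below_congr (n.lt_two_pow_self.trans (Nat.pow_lt_pow_succ (by norm_num))) h

lemma inv2_bit (b : Bool) {m n : ℕ} (h : n < 2 ^ m) :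
    inv2 (Nat.bit b n) = inv2 n + bif b then 0 else popcountBelow m n := by
  rw [inv2_eq_inv2Below (Nat.bit_lt_two_pow_succ_iff.2 h), inv2Below_bit, inv2_eq_inv2Below h]

lemma inv2_two_mul_add_one (n : ℕ) : inv2 (2 * n + 1) = inv2 n := by
  simpa [Nat.bit_true_apply] using inv2_bit true n.lt_two_pow_self

lemma inv2_four_mul (n : ℕ) : inv2 (4 * n) = inv2 n + 2 * popcountBelow n n := by
  have hn := n.lt_two_pow_self
  rw [show 4 * n = Nat.bit false (Nat.bit false n) by
      rw [Nat.bit_false_apply, Nat.bit_false_apply]; ring,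
    inv2_bit false (Nat.bit_lt_two_pow_succ_iff.2 hn), inv2_bit false hn, popcountBelow_bit]
  simp only [cond_false, Bool.toNat_false]
  ring

lemma inv2_four_mul_add_two (n : ℕ) : inv2 (4 * n + 2) = inv2 (2 * n) + 1 := by
  have hn := n.lt_two_pow_self
  rw [show 4 * n + 2 = Nat.bit false (Nat.bit true n) by
      rw [Nat.bit_false_apply, Nat.bit_true_apply]; ring,
    ← Nat.bit_false_apply,
    inv2_bit false (Nat.bit_lt_two_pow_succ_iff.2 hn), inv2_bit true hn, inv2_bit false hn,
    popcountBelow_bit]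
  simp only [cond_true, cond_false, Bool.toNat_true]
  ring

lemma iSeq_two_mul_add_one (n : ℕ) : iSeq (2 * n + 1) = iSeq n := by
  rw [iSeq, inv2_two_mul_add_one, iSeq]

lemma iSeq_four_mul (n : ℕ) : iSeq (4 * n) = iSeq n := by
  rw [iSeq, inv2_four_mul, pow_add, pow_mul, neg_one_sq, one_pow, mul_one, iSeq]

lemma iSeq_four_mul_add_two (n : ℕ) : iSeq (4 * n + 2) = -iSeq (2 * n) := by
  rw [iSeq, inv2_four_mul_add_two, pow_succ, mul_neg_one, iSeq]

lemma iSeq_four_mul_add_one (n : ℕ) : iSeq (4 * n + 1) = iSeq (2 * n) := by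
  rw [show 4 * n + 1 = 2 * (2 * n) + 1 by ring, iSeq_two_mul_add_one]

lemma iSeq_four_mul_add_three (n : ℕ) : iSeq (4 * n + 3) = iSeq n := by
  rw [show 4 * n + 3 = 2 * (2 * n + 1) + 1 by ring, iSeq_two_mul_add_one, iSeq_two_mul_add_one]

lemma iSeq_block (k : ℕ) :
    iSeq (4 * k) + iSeq (4 * k + 1) + iSeq (4 * k + 2) + iSeq (4 * k + 3) = 2 * iSeq k := by
  rw [iSeq_four_mul, iSeq_four_mul_add_one, iSeq_four_mul_add_two, iSeq_four_mul_add_three]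
  ring

lemma S_succ (N : ℕ) : S (N + 1) = S N + iSeq (N + 1) := sum_range_succ _ _

lemma S_add_four (N : ℕ) :
    S (N + 4) = S N + (iSeq (N + 1) + iSeq (N + 2) + iSeq (N + 3) + iSeq (N + 4)) := by
  simp only [S, sum_range_succ]
  ring

lemma S_four_mul_add_three (n : ℕ) : S (4 * n + 3) = 2 * S n := by
  induction n with
  | zero => simpa [S, sum_range_succ, add_assoc] using iSeq_block 0
  | succ n ih =>
    rw [show 4 * (n + 1) + 3 = 4 * n + 3 + 4 by ring, S_add_four, ih, S_succ, mul_add,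
      ← iSeq_block]
    ring_nf

theorem summatory_recurrences (n : ℕ) :
    S (4 * n) = 2 * S n - iSeq n ∧
      S (4 * n + 1) = 2 * S n - iSeq n + iSeq (2 * n) ∧
      S (4 * n + 2) = 2 * S n - iSeq n ∧
      S (4 * n + 3) = 2 * S n := by
  have h1 : S (4 * n + 1) = S (4 * n) + iSeq (2 * n) := by
    rw [S_succ, iSeq_four_mul_add_one]
  have h2 : S (4 * n + 2) = S (4 * n) := by
    rw [S_succ, h1, iSeq_four_mul_add_two, add_neg_cancel_right]
  have h3 : S (4 * n + 3) = S (4 * n) + iSeq n := by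
    rw [S_succ, h2, iSeq_four_mul_add_three]
  have h0 : S (4 * n) = 2 * S n - iSeq n := by
    linarith [S_four_mul_add_three n]
  exact ⟨h0, by rw [h1, h0], by rw [h2, h0], S_four_mul_add_three n⟩
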